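/- arXiv:math/0410380 — 5 statements merged into one kernel-verified Lean document; each statement's English description precedes it below -/
import Mathlib

section
/- Let λ > 1 and j0 ∈ ℤ, and let (a_j)_{j ≥ j0} be a solution of the chain model on [0, ∞) with a_j(t) ≥ 0 for every j ≥ j0 and t ≥ 0. Assume that for every j > j0 the tail energy E_{B(j)}(t) = Σ_{l ≥ j} a_l(t)² is finite for every t ≥ 0 and is differentiable in t with d/dt E_{B(j)}(t) = 2 λ^j a_{j-1}(t)² a_j(t). Let q and ρ be real numbers with λ^{-2} < q < 1 and (λ² q)^{-1/2} < ρ < 1 (so that λ ρ √q > 1). Then there exists an integer J ≥ j0 + 1 such that for every integer j ≥ J and every t0 ≥ 0: if E_{B(j)}(t0) ≥ q^j, then there exists t ∈ [t0, t0 + ρ^j] with E_{B(j+1)}(t) ≥ q^{j+1}. -/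
/-!
Suppose `E_{B(j+1)} < q^{j+1}` on `[t₀, t₀ + T]`, `T = ρ^j`. The energy identity makes
`E_{B(j)}` nondecreasing, so there `a_j² = E_{B(j)} - E_{B(j+1)} ≥ (1 - q) q^j`, while
`a_{j+2}² ≤ E_{B(j+1)} < q^{j+1}`. Hence `b = a_{j+1}` obeys `b' ≥ c - K b` with
`c = λ^{j+1} (1 - q) q^j` and `K = λ^{j+2} q^{(j+1)/2}`, and Grönwall gives `b ≥ c / (2K)` after
time `1/K`. Then `E_{B(j+1)}' = 2 λ^{j+1} a_j² b ≥ c² / K`, so `E_{B(j+1)}(t₀ + T) ≥ c² T / (2K)`.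
Both `K T` and `c² T / (K q^{j+1})` grow like `(λ ρ √q)^j`, and `λ ρ √q > 1`, so for large `j`
this exceeds `q^{j+1}`: a contradiction.
-/

open Real Set Filter

theorem monotoneOn_Icc_of_hasDerivWithinAt_nonneg {f f' : ℝ → ℝ} {a b : ℝ}
    (hf : ∀ x ∈ Icc a b, HasDerivWithinAt f (f' x) (Icc a b) x)
    (hf' : ∀ x ∈ Ioo a b, 0 ≤ f' x) : MonotoneOn f (Icc a b) := by
  refine monotoneOn_of_hasDerivWithinAt_nonneg (convex_Icc a b)
    (fun x hx => (hf x hx).continuousWithinAt) (fun x hx => ?_) (by rwa [interior_Icc])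
  rw [interior_Icc] at hx ⊢
  exact (hf x (Ioo_subset_Icc_self hx)).mono Ioo_subset_Icc_self

-- Grönwall's inequality applied to `-f`.
theorem div_add_mul_exp_le_of_sub_mul_le_deriv {f f' : ℝ → ℝ} {a b c K : ℝ} (hK : K ≠ 0)
    (hf : ∀ x ∈ Icc a b, HasDerivWithinAt f (f' x) (Icc a b) x)
    (bound : ∀ x ∈ Ico a b, c - K * f x ≤ f' x) :
    ∀ x ∈ Icc a b, c / K + (f a - c / K) * exp (-K * (x - a)) ≤ f x := by
  have hright (x : ℝ) (hx : x ∈ Ico a b) : HasDerivWithinAt (-f) (-f' x) (Ici x) x :=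
    ((hf x (Ico_subset_Icc_self hx)).mono_of_mem_nhdsWithin <|
      mem_of_superset (Icc_mem_nhdsGE hx.2) (Icc_subset_Icc_left hx.1)).neg
  intro x hx
  have key := le_gronwallBound_of_liminf_deriv_right_le (δ := -f a) (K := -K) (ε := -c)
    (fun y hy => (hf y hy).continuousWithinAt.neg)
    (fun y hy r hr => (hright y hy).liminf_right_slope_le hr) le_rfl
    (fun y hy => by simp only [Pi.neg_apply]; linarith [bound y hy]) x hx
  rw [gronwallBound_of_K_ne_0 (neg_ne_zero.2 hK), neg_div_neg_eq] at key
  simp only [Pi.neg_apply] at key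
  linear_combination key

theorem div_two_le_of_sub_mul_le_deriv {f f' : ℝ → ℝ} {a b c K : ℝ} (hK : 0 < K) (hc : 0 ≤ c)
    (hf : ∀ x ∈ Icc a b, HasDerivWithinAt f (f' x) (Icc a b) x)
    (bound : ∀ x ∈ Ico a b, c - K * f x ≤ f' x) (ha : 0 ≤ f a) :
    ∀ x ∈ Icc (a + K⁻¹) b, c / K / 2 ≤ f x := by
  intro x hx
  have hxa : K⁻¹ ≤ x - a := by linarith [hx.1]
  have hdecay : exp (-K * (x - a)) ≤ 1 / 2 := by
    refine le_trans (exp_le_exp.2 ?_) exp_neg_one_lt_half.le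
    have := mul_le_mul_of_nonneg_left hxa hK.le
    rw [mul_inv_cancel₀ hK.ne'] at this
    linarith
  have hcK : 0 ≤ c / K := div_nonneg hc hK.le
  have hlow := div_add_mul_exp_le_of_sub_mul_le_deriv hK.ne' hf bound x
    ⟨by linarith [inv_pos.2 hK], hx.2⟩
  linarith [mul_le_mul_of_nonneg_left hdecay hcK, mul_nonneg ha (exp_pos (-K * (x - a))).le]

-- After time `1/K ≤ T/2` the amplitude `b` exceeds `c / (2K)`, so `e` grows at rate `c² / K`.
theorem sq_mul_div_le_of_forced_growth {b b' e e' : ℝ → ℝ} {c K t₀ T : ℝ} (hK : 0 < K)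
    (hc : 0 ≤ c) (hKT : 2 ≤ K * T)
    (hb : ∀ x ∈ Icc t₀ (t₀ + T), HasDerivWithinAt b (b' x) (Icc t₀ (t₀ + T)) x)
    (hb' : ∀ x ∈ Icc t₀ (t₀ + T), c - K * b x ≤ b' x) (hb₀ : 0 ≤ b t₀)
    (he : ∀ x ∈ Icc t₀ (t₀ + T), HasDerivWithinAt e (e' x) (Icc t₀ (t₀ + T)) x)
    (he' : ∀ x ∈ Icc t₀ (t₀ + T), 2 * c * b x ≤ e' x) (he₀ : ∀ x ∈ Icc t₀ (t₀ + T), 0 ≤ e x) :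
    c ^ 2 * T / (2 * K) ≤ e (t₀ + T) := by
  have hτ : K⁻¹ ≤ T / 2 := by
    rw [inv_le_iff_one_le_mul₀ hK]; linarith
  have hT : t₀ + K⁻¹ ≤ t₀ + T := by linarith [inv_pos.2 hK]
  have hsub : Icc (t₀ + K⁻¹) (t₀ + T) ⊆ Icc t₀ (t₀ + T) :=
    Icc_subset_Icc_left (by linarith [inv_pos.2 hK])
  have hbig := div_two_le_of_sub_mul_le_deriv hK hc hb
    (fun x hx => hb' x (Ico_subset_Icc_self hx)) hb₀
  have hmono : MonotoneOn (fun x => e x - c ^ 2 / K * x) (Icc (t₀ + K⁻¹) (t₀ + T)) := by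
    refine monotoneOn_Icc_of_hasDerivWithinAt_nonneg
      (fun x hx => ((he x (hsub hx)).mono hsub).sub ((hasDerivWithinAt_id _ _).const_mul _))
      (fun x hx => ?_)
    have hrate := mul_le_mul_of_nonneg_left (hbig x (Ioo_subset_Icc_self hx))
      (by positivity : 0 ≤ 2 * c)
    have hc2 : 2 * c * (c / K / 2) = c ^ 2 / K := by ring
    simp only [mul_one]
    linarith [he' x (hsub (Ioo_subset_Icc_self hx))]
  have hlin : e (t₀ + K⁻¹) - c ^ 2 / K * (t₀ + K⁻¹) ≤ e (t₀ + T) - c ^ 2 / K * (t₀ + T) :=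
    hmono (left_mem_Icc.2 hT) (right_mem_Icc.2 hT) hT
  calc c ^ 2 * T / (2 * K) = c ^ 2 / K * (T - K⁻¹) - c ^ 2 / K * (T / 2 - K⁻¹) := by ring
    _ ≤ c ^ 2 / K * (T - K⁻¹) := sub_le_self _ (mul_nonneg (by positivity) (sub_nonneg.2 hτ))
    _ ≤ e (t₀ + T) - e (t₀ + K⁻¹) := by linarith
    _ ≤ e (t₀ + T) := by linarith [he₀ _ (hsub (left_mem_Icc.2 hT))]

theorem eventually_le_zpow_atTop {r : ℝ} (hr : 1 < r) (C : ℝ) : ∀ᶠ j : ℤ in atTop, C ≤ r ^ j := by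
  obtain ⟨N, hN⟩ := pow_unbounded_of_one_lt C hr
  filter_upwards [eventually_ge_atTop (N : ℤ)] with j hj
  exact hN.le.trans (by simpa using zpow_le_zpow_right₀ hr.le hj)

theorem Summable.tsum_add_natCast_eq_add {G : Type*} [AddCommGroup G] [TopologicalSpace G]
    [IsTopologicalAddGroup G] [T2Space G] {f : ℤ → G} {j : ℤ}
    (hf : Summable fun l : ℕ => f (j + l)) :
    ∑' l : ℕ, f (j + l) = f j + ∑' l : ℕ, f (j + 1 + l) := by
  rw [hf.tsum_eq_zero_add]
  push_cast
  simp only [add_zero, add_assoc, add_comm (1 : ℤ)]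

-- The constants `c` and `K` of the argument: lower bound of the forcing `λ^{j+1} a_j²` and upper
-- bound of the damping rate `λ^{j+2} a_{j+2}` in the equation of `a_{j+1}`.
noncomputable def chainForcing (lam q : ℝ) (j : ℤ) : ℝ := lam ^ (j + 1) * ((1 - q) * q ^ j)

noncomputable def chainDamping (lam q : ℝ) (j : ℤ) : ℝ := lam ^ (j + 2) * √q ^ (j + 1)

theorem eventually_chainDamping_chainForcing {lam q ρ : ℝ} (hlam : 0 < lam) (hq₀ : 0 < q)
    (hq₁ : q < 1) (hρ : (√(lam ^ 2 * q))⁻¹ < ρ) :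
    ∀ᶠ j : ℤ in atTop, 2 ≤ chainDamping lam q j * ρ ^ j ∧
      2 * chainDamping lam q j * q ^ (j + 1) ≤ chainForcing lam q j ^ 2 * ρ ^ j := by
  obtain ⟨s, hs, rfl⟩ : ∃ s, 0 < s ∧ q = s ^ 2 := ⟨√q, sqrt_pos.2 hq₀, (sq_sqrt hq₀.le).symm⟩
  have hls : 0 < lam * s := mul_pos hlam hs
  rw [sqrt_mul (by positivity), sqrt_sq hlam.le, sqrt_sq hs.le] at hρ
  have hr : 1 < lam * s * ρ := by rw [inv_lt_iff_one_lt_mul₀ hls] at hρ; linarith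
  have h1s : 0 < (1 - s ^ 2) ^ 2 := pow_pos (sub_pos.2 hq₁) 2
  -- With `r = λ s ρ`: `K ρ^j = λ² s r^j` and `c² ρ^j = (1 - s²)² r^j K q^{j+1} / s³`.
  filter_upwards [eventually_le_zpow_atTop hr (2 / (lam ^ 2 * s)),
    eventually_le_zpow_atTop hr (2 * s ^ 3 / (1 - s ^ 2) ^ 2)] with j hj₁ hj₂
  rw [div_le_iff₀' (by positivity)] at hj₁
  rw [div_le_iff₀' h1s] at hj₂
  have hsq : (s ^ 2) ^ j = s ^ j * s ^ j := by rw [sq, mul_zpow]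
  simp only [chainDamping, chainForcing, sqrt_sq hs.le, mul_zpow, zpow_add₀ hlam.ne',
    zpow_add₀ hs.ne', zpow_add₀ (pow_pos hs 2).ne', hsq, zpow_ofNat] at hj₁ hj₂ ⊢
  have hw : 0 ≤ lam ^ 2 * lam ^ j * (s ^ j) ^ 3 := by positivity
  constructor
  · linarith
  · linarith [mul_le_mul_of_nonneg_left hj₂ hw]

structure IsChainTailSolution (lam : ℝ) (j0 : ℤ) (a E : ℤ → ℝ → ℝ) : Prop where
  hasDerivWithinAt : ∀ j : ℤ, j0 < j → ∀ t : ℝ, 0 ≤ t → HasDerivWithinAt (a j)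
    (lam ^ j * a (j - 1) t ^ 2 - lam ^ (j + 1) * a j t * a (j + 1) t) (Ici 0) t
  nonneg : ∀ j : ℤ, j0 ≤ j → ∀ t : ℝ, 0 ≤ t → 0 ≤ a j t
  energy_eq : ∀ j : ℤ, ∀ t : ℝ, E j t = ∑' l : ℕ, a (j + l) t ^ 2
  summable : ∀ j : ℤ, j0 < j → ∀ t : ℝ, 0 ≤ t → Summable fun l : ℕ => a (j + l) t ^ 2
  hasDerivWithinAt_energy : ∀ j : ℤ, j0 < j → ∀ t : ℝ, 0 ≤ t →
    HasDerivWithinAt (E j) (2 * lam ^ j * a (j - 1) t ^ 2 * a j t) (Ici 0) t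

namespace IsChainTailSolution

variable {lam : ℝ} {j0 j : ℤ} {a E : ℤ → ℝ → ℝ} {q t t₀ t₁ T : ℝ}

theorem energy_nonneg (h : IsChainTailSolution lam j0 a E) (j : ℤ) (t : ℝ) : 0 ≤ E j t := by
  rw [h.energy_eq]
  exact tsum_nonneg fun _ => sq_nonneg _

theorem energy_eq_sq_add (h : IsChainTailSolution lam j0 a E) (hj : j0 < j) (ht : 0 ≤ t) :
    E j t = a j t ^ 2 + E (j + 1) t := by
  rw [h.energy_eq, h.energy_eq, (h.summable j hj t ht).tsum_add_natCast_eq_add (f := (a · t ^ 2))]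

theorem sq_le_energy (h : IsChainTailSolution lam j0 a E) (hj : j0 < j) (ht : 0 ≤ t) :
    a j t ^ 2 ≤ E j t := by
  linarith [h.energy_eq_sq_add hj ht, h.energy_nonneg (j + 1) t]

theorem energy_succ_le (h : IsChainTailSolution lam j0 a E) (hj : j0 < j) (ht : 0 ≤ t) :
    E (j + 1) t ≤ E j t := by
  linarith [h.energy_eq_sq_add hj ht, sq_nonneg (a j t)]

theorem hasDerivWithinAt_Icc (h : IsChainTailSolution lam j0 a E) (hj : j0 < j) (ht₀ : 0 ≤ t₀) :
    ∀ x ∈ Icc t₀ t₁, HasDerivWithinAt (a j)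
      (lam ^ j * a (j - 1) x ^ 2 - lam ^ (j + 1) * a j x * a (j + 1) x) (Icc t₀ t₁) x :=
  fun x hx => (h.hasDerivWithinAt j hj x (ht₀.trans hx.1)).mono fun _ hy => ht₀.trans hy.1

theorem hasDerivWithinAt_energy_Icc (h : IsChainTailSolution lam j0 a E) (hj : j0 < j)
    (ht₀ : 0 ≤ t₀) : ∀ x ∈ Icc t₀ t₁,
      HasDerivWithinAt (E j) (2 * lam ^ j * a (j - 1) x ^ 2 * a j x) (Icc t₀ t₁) x :=
  fun x hx => (h.hasDerivWithinAt_energy j hj x (ht₀.trans hx.1)).mono fun _ hy => ht₀.trans hy.1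

theorem monotoneOn_energy (h : IsChainTailSolution lam j0 a E) (hlam : 0 ≤ lam) (hj : j0 < j)
    (ht₀ : 0 ≤ t₀) : MonotoneOn (E j) (Icc t₀ t₁) :=
  monotoneOn_Icc_of_hasDerivWithinAt_nonneg (h.hasDerivWithinAt_energy_Icc hj ht₀) fun x hx => by
    have := h.nonneg j hj.le x (ht₀.trans hx.1.le)
    positivity

theorem chainForcing_le (h : IsChainTailSolution lam j0 a E) (hlam : 0 ≤ lam) (hq : 0 < q)
    (hj : j0 < j) (ht₀ : 0 ≤ t₀) (hstay : ∀ x ∈ Icc t₀ t₁, E (j + 1) x < q ^ (j + 1))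
    (hstart : q ^ j ≤ E j t₀) :
    ∀ x ∈ Icc t₀ t₁, chainForcing lam q j ≤ lam ^ (j + 1) * a j x ^ 2 := by
  intro x hx
  have hE := h.monotoneOn_energy hlam hj ht₀ (left_mem_Icc.2 (hx.1.trans hx.2)) hx hx.1
  have hsplit := h.energy_eq_sq_add hj (ht₀.trans hx.1)
  have hq' : q ^ (j + 1) = q * q ^ j := by rw [zpow_add_one₀ hq.ne', mul_comm]
  unfold chainForcing
  gcongr
  linarith [hstay x hx]

theorem mul_le_chainDamping (h : IsChainTailSolution lam j0 a E) (hlam : 0 ≤ lam) (hq : 0 ≤ q)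
    (hj : j0 < j) (ht₀ : 0 ≤ t₀) (hstay : ∀ x ∈ Icc t₀ t₁, E (j + 1) x < q ^ (j + 1)) :
    ∀ x ∈ Icc t₀ t₁, lam ^ (j + 2) * a (j + 2) x ≤ chainDamping lam q j := by
  intro x hx
  have hx₀ : 0 ≤ x := ht₀.trans hx.1
  have hq' : (√q ^ (j + 1)) ^ 2 = q ^ (j + 1) := by
    rw [← zpow_natCast, ← zpow_mul, mul_comm, zpow_mul, zpow_natCast, sq_sqrt hq]
  have hsq : a (j + 2) x ^ 2 < (√q ^ (j + 1)) ^ 2 := by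
    rw [hq', show j + 2 = j + 1 + 1 by ring]
    calc a (j + 1 + 1) x ^ 2 ≤ E (j + 1 + 1) x := h.sq_le_energy (by omega) hx₀
      _ ≤ E (j + 1) x := h.energy_succ_le (by omega) hx₀
      _ < q ^ (j + 1) := hstay x hx
  unfold chainDamping
  gcongr
  exact ((pow_lt_pow_iff_left₀ (h.nonneg _ (by omega) x hx₀) (by positivity) two_ne_zero).1 hsq).le

theorem exists_energy_succ_ge (h : IsChainTailSolution lam j0 a E) (hlam : 0 < lam)
    (hq₀ : 0 < q) (hq₁ : q < 1) (hj : j0 < j) (ht₀ : 0 ≤ t₀)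
    (hKT : 2 ≤ chainDamping lam q j * T)
    (hcK : 2 * chainDamping lam q j * q ^ (j + 1) ≤ chainForcing lam q j ^ 2 * T)
    (hstart : q ^ j ≤ E j t₀) : ∃ t ∈ Icc t₀ (t₀ + T), q ^ (j + 1) ≤ E (j + 1) t := by
  by_contra! hstay
  have hK : 0 < chainDamping lam q j := by
    have := sqrt_pos.2 hq₀
    unfold chainDamping; positivity
  have hc : 0 ≤ chainForcing lam q j := by
    have := sub_pos.2 hq₁
    unfold chainForcing; positivity
  have hT : 0 ≤ T := (pos_of_mul_pos_right (by linarith) hK.le).le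
  have hj₁ : j0 < j + 1 := by omega
  have hb := h.hasDerivWithinAt_Icc hj₁ ht₀ (t₁ := t₀ + T)
  simp only [add_sub_cancel_right, add_assoc, one_add_one_eq_two] at hb
  have hforce := h.chainForcing_le hlam.le hq₀ hj ht₀ hstay hstart
  have hdamp := h.mul_le_chainDamping hlam.le hq₀.le hj ht₀ hstay
  have hb₀ : ∀ x ∈ Icc t₀ (t₀ + T), 0 ≤ a (j + 1) x := fun x hx =>
    h.nonneg _ hj₁.le x (ht₀.trans hx.1)
  have hb' : ∀ x ∈ Icc t₀ (t₀ + T), chainForcing lam q j - chainDamping lam q j * a (j + 1) x ≤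
      lam ^ (j + 1) * a j x ^ 2 - lam ^ (j + 2) * a (j + 1) x * a (j + 2) x := fun x hx => by
    linarith [hforce x hx, mul_le_mul_of_nonneg_right (hdamp x hx) (hb₀ x hx)]
  have he' : ∀ x ∈ Icc t₀ (t₀ + T), 2 * chainForcing lam q j * a (j + 1) x ≤
      2 * lam ^ (j + 1) * a (j + 1 - 1) x ^ 2 * a (j + 1) x := fun x hx => by
    rw [add_sub_cancel_right]
    linarith [mul_le_mul_of_nonneg_right (hforce x hx) (hb₀ x hx)]
  have hT' : t₀ ≤ t₀ + T := le_add_of_nonneg_right hT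
  have hgrowth := sq_mul_div_le_of_forced_growth hK hc hKT hb hb' (hb₀ t₀ (left_mem_Icc.2 hT'))
    (h.hasDerivWithinAt_energy_Icc hj₁ ht₀) he' fun x _ => h.energy_nonneg _ x
  have hend := hstay (t₀ + T) (right_mem_Icc.2 hT')
  rw [div_le_iff₀ (by positivity)] at hgrowth
  linarith [mul_lt_mul_of_pos_right hend (by positivity : (0 : ℝ) < 2 * chainDamping lam q j)]

end IsChainTailSolution

theorem chainModel_tail_energy_propagation_general
    (lam : ℝ) (hlam : 1 < lam) (j0 : ℤ) (a : ℤ → ℝ → ℝ)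
    (hchain : ∀ j : ℤ, j0 < j → ∀ t : ℝ, 0 ≤ t →
      HasDerivWithinAt (a j)
        (lam ^ j * (a (j - 1) t) ^ 2 - lam ^ (j + 1) * a j t * a (j + 1) t)
        (Set.Ici 0) t)
    (hnonneg : ∀ j : ℤ, j0 ≤ j → ∀ t : ℝ, 0 ≤ t → 0 ≤ a j t)
    (E : ℤ → ℝ → ℝ)
    (hE : ∀ j : ℤ, ∀ t : ℝ, E j t = ∑' l : ℕ, (a (j + l) t) ^ 2)
    (hsum : ∀ j : ℤ, j0 < j → ∀ t : ℝ, 0 ≤ t →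
      Summable (fun l : ℕ => (a (j + l) t) ^ 2))
    (hEderiv : ∀ j : ℤ, j0 < j → ∀ t : ℝ, 0 ≤ t →
      HasDerivWithinAt (E j) (2 * lam ^ j * (a (j - 1) t) ^ 2 * a j t)
        (Set.Ici 0) t)
    (q ρ : ℝ) (hq1 : lam ^ (-2 : ℤ) < q) (hq2 : q < 1)
    (hρ1 : (Real.sqrt (lam ^ (2 : ℕ) * q))⁻¹ < ρ) :
    ∃ J : ℤ, j0 + 1 ≤ J ∧ ∀ j : ℤ, J ≤ j → ∀ t0 : ℝ, 0 ≤ t0 →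
      q ^ j ≤ E j t0 →
      ∃ t ∈ Set.Icc t0 (t0 + ρ ^ j), q ^ (j + 1) ≤ E (j + 1) t := by
  have hlam₀ : 0 < lam := by linarith
  have hq₀ : 0 < q := (zpow_pos hlam₀ _).trans hq1
  have hsol : IsChainTailSolution lam j0 a E := ⟨hchain, hnonneg, hE, hsum, hEderiv⟩
  obtain ⟨J, hJ⟩ := eventually_atTop.1 (eventually_chainDamping_chainForcing hlam₀ hq₀ hq2 hρ1)
  refine ⟨max J (j0 + 1), le_max_right _ _, fun j hj t0 ht0 hstart => ?_⟩
  obtain ⟨hKT, hcK⟩ := hJ j (le_of_max_le_left hj)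
  exact hsol.exists_energy_succ_ge hlam₀ hq₀ hq2 (by omega) ht0 hKT hcK hstart

/-- Lemma 1 of the paper, generalized.
For the chain model `da_j/dt = λ^j a_{j-1}² − λ^{j+1} a_j a_{j+1}` (`j > j0`),
`da_{j0}/dt = −λ^{j0+1} a_{j0} a_{j0+1}`, with nonnegative solution on `[0,∞)`,
finite tail energies `E_{B(j)}(t) = Σ_{l ≥ j} a_l(t)²` satisfying
`d/dt E_{B(j)} = 2 λ^j a_{j-1}² a_j`, and parameters `λ^{-2} < q < 1`,
`(λ² q)^{-1/2} < ρ < 1`: there is `J ≥ j0 + 1` such that for every `j ≥ J`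
and `t0 ≥ 0`, if `E_{B(j)}(t0) ≥ q^j`, then `E_{B(j+1)}(t) ≥ q^{j+1}` for
some `t ∈ [t0, t0 + ρ^j]`. -/
theorem chainModel_tail_energy_propagation
    (lam : ℝ) (hlam : 1 < lam) (j0 : ℤ) (a : ℤ → ℝ → ℝ)
    (hchain : ∀ j : ℤ, j0 < j → ∀ t : ℝ, 0 ≤ t →
      HasDerivWithinAt (a j)
        (lam ^ j * (a (j - 1) t) ^ 2 - lam ^ (j + 1) * a j t * a (j + 1) t)
        (Set.Ici 0) t)
    (hchain0 : ∀ t : ℝ, 0 ≤ t →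
      HasDerivWithinAt (a j0) (-(lam ^ (j0 + 1) * a j0 t * a (j0 + 1) t))
        (Set.Ici 0) t)
    (hnonneg : ∀ j : ℤ, j0 ≤ j → ∀ t : ℝ, 0 ≤ t → 0 ≤ a j t)
    (E : ℤ → ℝ → ℝ)
    (hE : ∀ j : ℤ, ∀ t : ℝ, E j t = ∑' l : ℕ, (a (j + l) t) ^ 2)
    (hsum : ∀ j : ℤ, j0 < j → ∀ t : ℝ, 0 ≤ t →
      Summable (fun l : ℕ => (a (j + l) t) ^ 2))
    (hEderiv : ∀ j : ℤ, j0 < j → ∀ t : ℝ, 0 ≤ t →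
      HasDerivWithinAt (E j) (2 * lam ^ j * (a (j - 1) t) ^ 2 * a j t)
        (Set.Ici 0) t)
    (q ρ : ℝ) (hq1 : lam ^ (-2 : ℤ) < q) (hq2 : q < 1)
    (hρ1 : (Real.sqrt (lam ^ (2 : ℕ) * q))⁻¹ < ρ) (hρ2 : ρ < 1) :
    ∃ J : ℤ, j0 + 1 ≤ J ∧ ∀ j : ℤ, J ≤ j → ∀ t0 : ℝ, 0 ≤ t0 →
      q ^ j ≤ E j t0 →
      ∃ t ∈ Set.Icc t0 (t0 + ρ ^ j), q ^ (j + 1) ≤ E (j + 1) t :=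
  chainModel_tail_energy_propagation_general lam hlam j0 a hchain hnonneg E hE hsum hEderiv q ρ hq1
    hq2 hρ1
end

section
/- Let j0 ∈ ℤ and let (a_j)_{j ≥ j0} be a solution on [0, ∞) of the dyadic inviscid Burgers model da_j/dt = 2^j a_{j-1}² − 2^{j+1} a_j a_{j+1} for j > j0, da_{j0}/dt = −2^{j0+1} a_{j0} a_{j0+1}, with a_j(t) ≥ 0 for all j and t ≥ 0, and assume that for every j > j0 the tail energy E_{B(j)}(t) = Σ_{l ≥ j} a_l(t)² is finite for every t ≥ 0 and differentiable in t with d/dt E_{B(j)}(t) = 2 · 2^j a_{j-1}(t)² a_j(t). Then for every α > 0 and every q with max(1/4, 2^{-2α}) < q < 1, there exists an integer J0 such that: if E_{B(J)}(0) ≥ q^J for some integer J ≥ J0, then there exists a finite time T such that sup_{t ∈ [0, T]} Σ_{j ≥ j0} (1 + 2^{2αj}) a_j(t)² = +∞. In other words, the dyadic inviscid Burgers model exhibits finite-time blow-up of the H^α norm for every α > 0. -/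
open scoped ENNReal

/-!
Energy cascade. Put `p = √q ∈ (1/2, 1)`. Suppose `E_j ≥ q^j` at time `t₀`. While
`E_{j+1} < q^{j+1}`, the monotonicity of the tail energies gives `a_j² ≥ q^j (1 - q)` and
`a_{j+2} ≤ p^{j+1}`, so `a_{j+1}' ≥ A - B a_{j+1}` with `A = 2^{j+1} q^j (1 - q)` and
`B = 2^{j+2} p^{j+1}`: within time `1/B` the mode `a_{j+1}` reaches half of `A / B`, and
from then on the flux `2^{j+2} a_j² a_{j+1}` into `E_{j+1}` lifts it to `q^{j+1}`. Both
waiting times are of order `(2p)^{-j}`, so `E_{j+1} ≥ q^{j+1}` by time `t₀ + C (2p)^{-j}`.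
Since `2p > 1` these times are summable: within a finite time `T` every level
`E_{J+k} ≥ q^{J+k}` is reached, and there the `H^α` norm is at least `(2^{2α} q)^{J+k}`,
unbounded because `q > 2^{-2α}`.
-/

open Set Real

theorem Convex.monotoneOn_of_hasDerivWithinAt_nonneg {D : Set ℝ} (hD : Convex ℝ D)
    {f f' : ℝ → ℝ} (hf : ∀ x ∈ D, HasDerivWithinAt f (f' x) D x)
    (hf' : ∀ x ∈ interior D, 0 ≤ f' x) : MonotoneOn f D :=
  _root_.monotoneOn_of_hasDerivWithinAt_nonneg hD (fun x hx => (hf x hx).continuousWithinAt)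
    (fun x hx => (hf x (interior_subset hx)).mono interior_subset) hf'

theorem le_of_hasDerivWithinAt_ge_affine {y y' : ℝ → ℝ} {t₀ t₁ A B : ℝ} (hB : B ≠ 0)
    (hy : ∀ t ∈ Icc t₀ t₁, HasDerivWithinAt y (y' t) (Icc t₀ t₁) t)
    (hy' : ∀ t ∈ Ioo t₀ t₁, A - B * y t ≤ y' t) {t : ℝ} (ht : t ∈ Icc t₀ t₁) :
    A / B + (y t₀ - A / B) * exp (-(B * (t - t₀))) ≤ y t := by
  set u : ℝ → ℝ := fun t => exp (B * (t - t₀)) * (y t - A / B)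
  have hu : MonotoneOn u (Icc t₀ t₁) := by
    refine (convex_Icc t₀ t₁).monotoneOn_of_hasDerivWithinAt_nonneg
      (f' := fun t => exp (B * (t - t₀)) * (y' t + B * y t - A)) (fun t ht => ?_) fun t ht => ?_
    · have hexp : HasDerivWithinAt (fun t => exp (B * (t - t₀))) (exp (B * (t - t₀)) * B)
          (Icc t₀ t₁) t := by
        simpa using (((hasDerivWithinAt_id t _).sub_const t₀).const_mul B).exp
      refine (hexp.mul ((hy t ht).sub_const (A / B))).congr_deriv ?_
      field_simp
      ring
    · rw [interior_Icc] at ht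
      exact mul_nonneg (exp_pos _).le (by linarith [hy' t ht])
  have hle : y t₀ - A / B ≤ exp (B * (t - t₀)) * (y t - A / B) := by
    simpa [u] using hu (left_mem_Icc.2 (ht.1.trans ht.2)) ht ht.1
  have hinv : exp (-(B * (t - t₀))) * exp (B * (t - t₀)) = 1 := by
    rw [← exp_add]; simp
  have := mul_le_mul_of_nonneg_left hle (exp_pos (-(B * (t - t₀)))).le
  rw [← mul_assoc, hinv, one_mul] at this
  linarith

theorem exists_mem_Icc_of_geometric_step {P : ℤ → ℝ → Prop} {C w : ℝ} (hC : 0 ≤ C)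
    (hw₀ : 0 < w) (hw₁ : w < 1) {J : ℤ}
    (hstep : ∀ j ≥ J, ∀ t, 0 ≤ t → P j t → P (j + 1) (t + C * w ^ j)) (hJ : P J 0) (k : ℕ) :
    ∃ t ∈ Icc 0 (C * w ^ J / (1 - w)), P (J + k) t := by
  have hw : 0 < 1 - w := by linarith
  have key : ∀ k : ℕ, ∃ t, 0 ≤ t ∧ t ≤ C * w ^ J * (1 - w ^ k) / (1 - w) ∧ P (J + k) t := by
    intro k
    induction k with
    | zero => exact ⟨0, le_rfl, by simp, by simpa using hJ⟩
    | succ k ih =>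
      obtain ⟨t, ht₀, ht, hP⟩ := ih
      refine ⟨t + C * w ^ (J + k), by positivity, ?_, by
        simpa [add_assoc] using hstep (J + k) (by omega) t ht₀ hP⟩
      have hwk : w ^ (J + k) = w ^ J * w ^ k := by rw [zpow_add₀ hw₀.ne', zpow_natCast]
      calc t + C * w ^ (J + k) ≤ C * w ^ J * (1 - w ^ k) / (1 - w) + C * w ^ J * w ^ k := by
            rw [hwk, ← mul_assoc]; gcongr
        _ = C * w ^ J * (1 - w ^ (k + 1)) / (1 - w) := by field_simp; ring
  obtain ⟨t, ht₀, ht, hP⟩ := key k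
  refine ⟨t, ⟨ht₀, ht.trans (div_le_div_of_nonneg_right ?_ hw.le)⟩, hP⟩
  exact mul_le_of_le_one_right (by positivity) (by linarith [pow_pos hw₀ k])

structure IsDyadicBurgersSolution (j₀ : ℤ) (a E : ℤ → ℝ → ℝ) : Prop where
  hasDerivWithinAt : ∀ j : ℤ, j₀ < j → ∀ t : ℝ, 0 ≤ t →
    HasDerivWithinAt (a j)
      ((2 : ℝ) ^ j * (a (j - 1) t) ^ 2 - (2 : ℝ) ^ (j + 1) * a j t * a (j + 1) t) (Ici 0) t
  nonneg : ∀ j : ℤ, j₀ ≤ j → ∀ t : ℝ, 0 ≤ t → 0 ≤ a j t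
  energy_eq : ∀ j : ℤ, ∀ t : ℝ, E j t = ∑' l : ℕ, (a (j + l) t) ^ 2
  summable : ∀ j : ℤ, j₀ < j → ∀ t : ℝ, 0 ≤ t → Summable fun l : ℕ => (a (j + l) t) ^ 2
  hasDerivWithinAt_energy : ∀ j : ℤ, j₀ < j → ∀ t : ℝ, 0 ≤ t →
    HasDerivWithinAt (E j) (2 * (2 : ℝ) ^ j * (a (j - 1) t) ^ 2 * a j t) (Ici 0) t

namespace IsDyadicBurgersSolution

variable {j₀ j : ℤ} {a E : ℤ → ℝ → ℝ}

theorem energy_nonneg (h : IsDyadicBurgersSolution j₀ a E) (j : ℤ) (t : ℝ) : 0 ≤ E j t := by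
  rw [h.energy_eq]
  exact tsum_nonneg fun l => sq_nonneg _

theorem energy_eq_sq_add (h : IsDyadicBurgersSolution j₀ a E) (hj : j₀ < j) {t : ℝ}
    (ht : 0 ≤ t) :
    E j t = a j t ^ 2 + E (j + 1) t := by
  rw [h.energy_eq, h.energy_eq, (h.summable j hj t ht).tsum_eq_zero_add]
  congr 1
  · simp
  · exact tsum_congr fun l => by push_cast; ring_nf

theorem sq_le_energy (h : IsDyadicBurgersSolution j₀ a E) (hj : j₀ < j) {t : ℝ} (ht : 0 ≤ t) :
    a j t ^ 2 ≤ E j t := by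
  linarith [h.energy_eq_sq_add hj ht, h.energy_nonneg (j + 1) t]

theorem energy_succ_le (h : IsDyadicBurgersSolution j₀ a E) (hj : j₀ < j) {t : ℝ} (ht : 0 ≤ t) :
    E (j + 1) t ≤ E j t := by
  linarith [h.energy_eq_sq_add hj ht, sq_nonneg (a j t)]

theorem monotoneOn_energy (h : IsDyadicBurgersSolution j₀ a E) (hj : j₀ < j) :
    MonotoneOn (E j) (Ici 0) :=
  (convex_Ici 0).monotoneOn_of_hasDerivWithinAt_nonneg (h.hasDerivWithinAt_energy j hj)
    fun t ht => by
      rw [interior_Ici] at ht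
      have := h.nonneg j hj.le t ht.le
      positivity

theorem le_mode_succ (h : IsDyadicBurgersSolution j₀ a E) (hj : j₀ < j) {t₀ t₁ ε s : ℝ}
    (ht₀ : 0 ≤ t₀) (hε : 0 ≤ ε) (hs : 0 < s) (hεa : ∀ t ∈ Icc t₀ t₁, ε ≤ a j t ^ 2)
    (has : ∀ t ∈ Icc t₀ t₁, a (j + 2) t ≤ s) {t : ℝ}
    (ht : t ∈ Icc (t₀ + 1 / ((2 : ℝ) ^ (j + 2) * s)) t₁) :
    ε / (4 * s) ≤ a (j + 1) t := by
  set A : ℝ := (2 : ℝ) ^ (j + 1) * ε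
  set B : ℝ := (2 : ℝ) ^ (j + 2) * s
  have h2j : (2 : ℝ) ^ (j + 2) = 2 ^ (j + 1) * 2 := by
    rw [← zpow_add_one₀ two_ne_zero]; ring_nf
  have hB : 0 < B := by positivity
  have hAB : A / B = ε / (2 * s) := by
    simp only [A, B, h2j]; field_simp
  have hsub : Icc t₀ t₁ ⊆ Ici 0 := fun x hx => ht₀.trans hx.1
  have htI : t ∈ Icc t₀ t₁ := ⟨le_trans (le_add_of_nonneg_right (by positivity)) ht.1, ht.2⟩
  have hy' : ∀ t ∈ Ioo t₀ t₁, A - B * a (j + 1) t ≤ (2 : ℝ) ^ (j + 1) * a (j + 1 - 1) t ^ 2 -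
      2 ^ (j + 1 + 1) * a (j + 1) t * a (j + 1 + 1) t := by
    intro t ht
    rw [show j + 1 - 1 = j by omega, show j + 1 + 1 = j + 2 by omega]
    have hεt := mul_le_mul_of_nonneg_left (hεa t (Ioo_subset_Icc_self ht))
      (zpow_pos two_pos (j + 1)).le
    have hst := mul_le_mul_of_nonneg_left (has t (Ioo_subset_Icc_self ht))
      (mul_nonneg (zpow_pos two_pos (j + 2)).le (h.nonneg (j + 1) (by omega) t (ht₀.trans ht.1.le)))
    simp only [A, B]
    linarith
  have hcomp := le_of_hasDerivWithinAt_ge_affine (A := A) hB.ne'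
    (fun t ht => (h.hasDerivWithinAt (j + 1) (by omega) t (ht₀.trans ht.1)).mono hsub) hy' htI
  have hexp : exp (-(B * (t - t₀))) ≤ 1 / 2 := by
    refine (exp_le_exp.2 ?_).trans exp_neg_one_lt_half.le
    have := (div_le_iff₀' hB).1 (le_sub_iff_add_le'.2 ht.1)
    linarith
  have h0 := h.nonneg (j + 1) (by omega) t₀ ht₀
  have hAB0 : 0 ≤ A / B := by positivity
  have : ε / (4 * s) = A / B / 2 := by rw [hAB]; field_simp; ring
  linarith [mul_le_mul_of_nonneg_left hexp hAB0, mul_nonneg h0 (exp_pos (-(B * (t - t₀)))).le]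

theorem energy_add_mul_le (h : IsDyadicBurgersSolution j₀ a E) (hj : j₀ < j) {t₀ t₁ ε m : ℝ}
    (ht₀ : 0 ≤ t₀) (ht : t₀ ≤ t₁) (hm : 0 ≤ m) (hεa : ∀ t ∈ Icc t₀ t₁, ε ≤ a j t ^ 2)
    (hma : ∀ t ∈ Icc t₀ t₁, m ≤ a (j + 1) t) :
    E (j + 1) t₀ + 2 ^ (j + 2) * ε * m * (t₁ - t₀) ≤ E (j + 1) t₁ := by
  set K : ℝ := 2 ^ (j + 2) * ε * m
  have hmono : MonotoneOn (fun t => E (j + 1) t - K * t) (Icc t₀ t₁) := by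
    refine (convex_Icc t₀ t₁).monotoneOn_of_hasDerivWithinAt_nonneg
      (f' := fun t => 2 * 2 ^ (j + 1) * a (j + 1 - 1) t ^ 2 * a (j + 1) t - K)
      (fun t ht => ?_) fun t ht => ?_
    · refine ((h.hasDerivWithinAt_energy (j + 1) (by omega) t (ht₀.trans ht.1)).mono
        fun x hx => ht₀.trans hx.1).sub ?_
      simpa using (hasDerivWithinAt_id t _).const_mul K
    · rw [interior_Icc] at ht
      have hεm := mul_le_mul (hεa t (Ioo_subset_Icc_self ht)) (hma t (Ioo_subset_Icc_self ht)) hm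
        (sq_nonneg _)
      have h2j : (2 : ℝ) * 2 ^ (j + 1) = 2 ^ (j + 2) := by
        rw [← zpow_one_add₀ two_ne_zero]; ring_nf
      rw [show j + 1 - 1 = j by omega, h2j, sub_nonneg, mul_assoc]
      simp only [K, mul_assoc]
      exact mul_le_mul_of_nonneg_left hεm (by positivity)
  have := hmono (left_mem_Icc.2 ht) (right_mem_Icc.2 ht) ht
  simp only at this
  linarith

/-- `a_{j+1}` needs time `1 / (2^{j+2} s)` to climb to `ε / (4 s)`; from then on the flux into
`E_{j+1}` is at least `2^j ε² / s`. -/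
theorem le_energy_succ_of_forall_Icc (h : IsDyadicBurgersSolution j₀ a E) (hj : j₀ < j)
    {t₀ t₁ ε s δ : ℝ} (ht₀ : 0 ≤ t₀) (hε : 0 < ε) (hs : 0 < s) (hδ : 0 ≤ δ)
    (ht₁ : t₁ = t₀ + 1 / (2 ^ (j + 2) * s) + δ * s / (2 ^ j * ε ^ 2))
    (hεa : ∀ t ∈ Icc t₀ t₁, ε ≤ a j t ^ 2) (has : ∀ t ∈ Icc t₀ t₁, a (j + 2) t ≤ s) :
    δ ≤ E (j + 1) t₁ := by
  set B : ℝ := 2 ^ (j + 2) * s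
  have hB : 0 < B := by positivity
  have hmid : t₀ + 1 / B ≤ t₁ := by
    have : 0 ≤ δ * s / (2 ^ j * ε ^ 2) := by positivity
    linarith
  have hgrow := h.energy_add_mul_le hj (by positivity) hmid (by positivity)
    (fun t ht => hεa t ⟨le_trans (le_add_of_nonneg_right (by positivity)) ht.1, ht.2⟩)
    fun t ht => h.le_mode_succ hj ht₀ hε.le hs hεa has ht
  have hflux : 2 ^ (j + 2) * ε * (ε / (4 * s)) * (t₁ - (t₀ + 1 / B)) = δ := by
    rw [ht₁, zpow_add₀ two_ne_zero]
    field_simp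
    ring
  linarith [h.energy_nonneg (j + 1) (t₀ + 1 / B)]

theorem le_energy_succ (h : IsDyadicBurgersSolution j₀ a E) (hj : j₀ < j) {p q : ℝ}
    (hp : 0 < p) (hpq : p ^ 2 = q) (hq : q < 1) {t₀ : ℝ} (ht₀ : 0 ≤ t₀) (hE : q ^ j ≤ E j t₀) :
    q ^ (j + 1) ≤ E (j + 1) (t₀ + (1 / (4 * p) + q * p / (1 - q) ^ 2) * (2 * p)⁻¹ ^ j) := by
  by_contra! hlt
  set t₁ := t₀ + (1 / (4 * p) + q * p / (1 - q) ^ 2) * (2 * p)⁻¹ ^ j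
  have hq₀ : 0 < q := hpq ▸ by positivity
  have hε : 0 < q ^ j * (1 - q) := mul_pos (zpow_pos hq₀ j) (by linarith)
  have hs : 0 < p ^ (j + 1) := zpow_pos hp _
  have hqj : q ^ j = (p ^ j) ^ 2 := by
    rw [← hpq, ← zpow_natCast, ← zpow_mul, mul_comm, zpow_mul, zpow_natCast]
  have ht₁ : t₁ = t₀ + 1 / (2 ^ (j + 2) * p ^ (j + 1)) +
      q ^ (j + 1) * p ^ (j + 1) / (2 ^ j * (q ^ j * (1 - q)) ^ 2) := by
    have hq1 : 1 - q ≠ 0 := by linarith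
    simp only [t₁]
    rw [zpow_add_one₀ hq₀.ne', hqj, zpow_add₀ two_ne_zero, zpow_add_one₀ hp.ne', inv_zpow,
      mul_zpow]
    field_simp
    ring
  have hsub : Icc t₀ t₁ ⊆ Ici 0 := fun x hx => ht₀.trans hx.1
  have ht₁_mem : t₁ ∈ Icc t₀ t₁ := right_mem_Icc.2 (le_add_of_nonneg_right (by positivity))
  have hEj1 : ∀ t ∈ Icc t₀ t₁, E (j + 1) t ≤ q ^ (j + 1) := fun t ht =>
    ((h.monotoneOn_energy (by omega)) (hsub ht) (hsub ht₁_mem) ht.2).trans hlt.le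
  refine hlt.not_ge (h.le_energy_succ_of_forall_Icc hj ht₀ hε hs (by positivity) ht₁
    (fun t ht => ?_) fun t ht => ?_)
  · have hEj := hE.trans (h.monotoneOn_energy hj ht₀ (hsub ht) ht.1)
    have := hEj1 t ht
    rw [zpow_add_one₀ hq₀.ne'] at this
    linarith [h.energy_eq_sq_add hj (hsub ht)]
  · have hs2 : (p ^ (j + 1)) ^ 2 = q ^ (j + 1) := by
      rw [← zpow_natCast, ← zpow_mul, mul_comm, zpow_mul, zpow_natCast, hpq]
    have h2 := h.sq_le_energy (j := j + 2) (by omega) (hsub ht)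
    have h1 := h.energy_succ_le (j := j + 1) (by omega) (hsub ht)
    rw [show j + 1 + 1 = j + 2 by omega] at h1
    refine (pow_le_pow_iff_left₀ (h.nonneg _ (by omega) t (hsub ht)) hs.le two_ne_zero).1 ?_
    linarith [hEj1 t ht]

end IsDyadicBurgersSolution

/-- `∑_{j ≥ j₀} (1 + 2^{2αj}) b_j²`, the squared `H^α` norm, summed over `l = j - j₀`. -/
noncomputable def dyadicSobolevSq (α : ℝ) (j₀ : ℤ) (b : ℤ → ℝ) : ℝ≥0∞ :=
  ∑' l : ℕ, ENNReal.ofReal ((1 + (2 : ℝ) ^ (2 * α * ((j₀ : ℝ) + (l : ℝ)))) * b (j₀ + l) ^ 2)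

theorem ofReal_zpow_mul_tsum_le_dyadicSobolevSq {α : ℝ} (hα : 0 ≤ α) {j₀ j : ℤ} (hj : j₀ ≤ j)
    {b : ℤ → ℝ} (hb : Summable fun l : ℕ => b (j + l) ^ 2) :
    ENNReal.ofReal (((2 : ℝ) ^ (2 * α)) ^ j * ∑' l : ℕ, b (j + l) ^ 2) ≤
      dyadicSobolevSq α j₀ b := by
  obtain ⟨d, rfl⟩ : ∃ d : ℕ, j = j₀ + d := ⟨(j - j₀).toNat, by omega⟩
  rw [← tsum_mul_left, ENNReal.ofReal_tsum_of_nonneg (fun l => by positivity) (hb.mul_left _)]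
  refine le_trans (ENNReal.tsum_le_tsum fun l => ?_)
    (ENNReal.tsum_comp_le_tsum_of_injective (add_left_injective d) _)
  refine ENNReal.ofReal_le_ofReal ?_
  simp only [Nat.cast_add, ← add_assoc]
  rw [show j₀ + (l : ℤ) + d = j₀ + d + l by ring]
  gcongr
  rw [← Real.rpow_intCast, ← Real.rpow_mul zero_le_two]
  refine (Real.rpow_le_rpow_of_exponent_le one_le_two ?_).trans (le_add_of_nonneg_left zero_le_one)
  push_cast
  nlinarith [l.cast_nonneg (α := ℝ)]

open Filter Topology in
theorem iSup_dyadicSobolevSq_eq_top {α q : ℝ} (hα : 0 ≤ α) (hq : 0 < q)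
    (hαq : 1 < 2 ^ (2 * α) * q) {j₀ J : ℤ} (hJ : j₀ ≤ J) {S : Set ℝ} {b : ℝ → ℤ → ℝ}
    (hb : ∀ k : ℕ, ∃ t ∈ S, Summable (fun l : ℕ => b t (J + k + l) ^ 2) ∧
      q ^ (J + k) ≤ ∑' l : ℕ, b t (J + k + l) ^ 2) :
    ⨆ t ∈ S, dyadicSobolevSq α j₀ (b t) = ⊤ := by
  set g : ℝ := 2 ^ (2 * α)
  have htend : Tendsto (fun k : ℕ => ENNReal.ofReal ((g * q) ^ J * (g * q) ^ k)) atTop (𝓝 ⊤) :=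
    ENNReal.tendsto_ofReal_atTop.comp
      ((tendsto_pow_atTop_atTop_of_one_lt hαq).const_mul_atTop (zpow_pos (by linarith) J))
  refine top_le_iff.1 (le_of_tendsto' htend fun k => ?_)
  obtain ⟨t, ht, hsum, hk⟩ := hb k
  calc ENNReal.ofReal ((g * q) ^ J * (g * q) ^ k)
      = ENNReal.ofReal (g ^ (J + k) * q ^ (J + k)) := by
        rw [← mul_zpow, zpow_add₀ (by positivity), zpow_natCast]
    _ ≤ ENNReal.ofReal (g ^ (J + k) * ∑' l : ℕ, b t (J + k + l) ^ 2) := by gcongr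
    _ ≤ dyadicSobolevSq α j₀ (b t) :=
        ofReal_zpow_mul_tsum_le_dyadicSobolevSq hα (by omega) hsum
    _ ≤ _ := le_biSup (fun t => dyadicSobolevSq α j₀ (b t)) ht

theorem dyadicBurgers_finite_time_blowup_general
    (j0 : ℤ) (a : ℤ → ℝ → ℝ)
    (hchain : ∀ j : ℤ, j0 < j → ∀ t : ℝ, 0 ≤ t →
      HasDerivWithinAt (a j)
        ((2 : ℝ) ^ j * (a (j - 1) t) ^ 2 - (2 : ℝ) ^ (j + 1) * a j t * a (j + 1) t)
        (Set.Ici 0) t)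
    (hnonneg : ∀ j : ℤ, j0 ≤ j → ∀ t : ℝ, 0 ≤ t → 0 ≤ a j t)
    (E : ℤ → ℝ → ℝ)
    (hE : ∀ j : ℤ, ∀ t : ℝ, E j t = ∑' l : ℕ, (a (j + l) t) ^ 2)
    (hsum : ∀ j : ℤ, j0 < j → ∀ t : ℝ, 0 ≤ t →
      Summable (fun l : ℕ => (a (j + l) t) ^ 2))
    (hEderiv : ∀ j : ℤ, j0 < j → ∀ t : ℝ, 0 ≤ t →
      HasDerivWithinAt (E j) (2 * (2 : ℝ) ^ j * (a (j - 1) t) ^ 2 * a j t)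
        (Set.Ici 0) t)
    (α : ℝ) (hα : 0 < α)
    (q : ℝ) (hq1 : max (1 / 4 : ℝ) ((2 : ℝ) ^ (-(2 * α))) < q) (hq2 : q < 1) :
    ∃ J0 : ℤ, j0 ≤ J0 ∧ ∀ J : ℤ, J0 ≤ J → q ^ J ≤ E J 0 →
      ∃ T : ℝ, 0 < T ∧
        (⨆ t ∈ Set.Icc (0 : ℝ) T,
          ∑' l : ℕ, ENNReal.ofReal
            ((1 + (2 : ℝ) ^ (2 * α * ((j0 : ℝ) + (l : ℝ)))) * (a (j0 + l) t) ^ 2))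
          = (⊤ : ℝ≥0∞) := by
  have hsol : IsDyadicBurgersSolution j0 a E := ⟨hchain, hnonneg, hE, hsum, hEderiv⟩
  obtain ⟨hq14, hqα⟩ := max_lt_iff.1 hq1
  have hq : 0 < q := by linarith
  set p := √q
  have hp : 1 / 2 < p := (lt_sqrt (by norm_num)).2 (by linarith)
  have hp₀ : 0 < p := by linarith
  set C := 1 / (4 * p) + q * p / (1 - q) ^ 2
  set w := (2 * p)⁻¹
  have hw₁ : w < 1 := inv_lt_one_of_one_lt₀ (by linarith)
  refine ⟨j0 + 1, by omega, fun J hJ hEJ => ⟨C * w ^ J / (1 - w), ?_, ?_⟩⟩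
  · have := sub_pos.2 hw₁
    positivity
  have hcascade := exists_mem_Icc_of_geometric_step (P := fun j t => q ^ j ≤ E j t)
    (by positivity) (by positivity) hw₁
    (fun j hj t ht hP => hsol.le_energy_succ (by omega) hp₀ (sq_sqrt hq.le) hq2 ht hP) hEJ
  have hαq : 1 < 2 ^ (2 * α) * q := by
    rwa [rpow_neg zero_le_two, inv_lt_iff_one_lt_mul₀' (by positivity)] at hqα
  refine iSup_dyadicSobolevSq_eq_top (j₀ := j0) (J := J) (b := fun t j => a j t)
    hα.le hq hαq (by omega) fun k => ?_
  obtain ⟨t, ht, hk⟩ := hcascade k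
  exact ⟨t, ht, hsum _ (by omega) t ht.1, hE _ t ▸ hk⟩

/-- The dyadic inviscid Burgers model
`da_j/dt = 2^j a_{j-1}² − 2^{j+1} a_j a_{j+1}` (`j > j0`),
`da_{j0}/dt = −2^{j0+1} a_{j0} a_{j0+1}`, with nonnegative solution and
tail energies `E_{B(j)}` finite and satisfying
`d/dt E_{B(j)} = 2·2^j a_{j-1}² a_j`, exhibits finite-time blow-up of the
`H^α` norm for every `α > 0`: for every `q` with
`max(1/4, 2^{-2α}) < q < 1` there is `J0` such that if `E_{B(J)}(0) ≥ q^J`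
for some `J ≥ J0`, then `sup_{t ∈ [0,T]} Σ_{j ≥ j0} (1 + 2^{2αj}) a_j(t)² = ∞`
for some finite time `T`. -/
theorem dyadicBurgers_finite_time_blowup
    (j0 : ℤ) (a : ℤ → ℝ → ℝ)
    (hchain : ∀ j : ℤ, j0 < j → ∀ t : ℝ, 0 ≤ t →
      HasDerivWithinAt (a j)
        ((2 : ℝ) ^ j * (a (j - 1) t) ^ 2 - (2 : ℝ) ^ (j + 1) * a j t * a (j + 1) t)
        (Set.Ici 0) t)
    (hchain0 : ∀ t : ℝ, 0 ≤ t →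
      HasDerivWithinAt (a j0) (-((2 : ℝ) ^ (j0 + 1) * a j0 t * a (j0 + 1) t))
        (Set.Ici 0) t)
    (hnonneg : ∀ j : ℤ, j0 ≤ j → ∀ t : ℝ, 0 ≤ t → 0 ≤ a j t)
    (E : ℤ → ℝ → ℝ)
    (hE : ∀ j : ℤ, ∀ t : ℝ, E j t = ∑' l : ℕ, (a (j + l) t) ^ 2)
    (hsum : ∀ j : ℤ, j0 < j → ∀ t : ℝ, 0 ≤ t →
      Summable (fun l : ℕ => (a (j + l) t) ^ 2))
    (hEderiv : ∀ j : ℤ, j0 < j → ∀ t : ℝ, 0 ≤ t →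
      HasDerivWithinAt (E j) (2 * (2 : ℝ) ^ j * (a (j - 1) t) ^ 2 * a j t)
        (Set.Ici 0) t)
    (α : ℝ) (hα : 0 < α)
    (q : ℝ) (hq1 : max (1 / 4 : ℝ) ((2 : ℝ) ^ (-(2 * α))) < q) (hq2 : q < 1) :
    ∃ J0 : ℤ, j0 ≤ J0 ∧ ∀ J : ℤ, J0 ≤ J → q ^ J ≤ E J 0 →
      ∃ T : ℝ, 0 < T ∧
        (⨆ t ∈ Set.Icc (0 : ℝ) T,
          ∑' l : ℕ, ENNReal.ofReal
            ((1 + (2 : ℝ) ^ (2 * α * ((j0 : ℝ) + (l : ℝ)))) * (a (j0 + l) t) ^ 2))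
          = (⊤ : ℝ≥0∞) :=
  dyadicBurgers_finite_time_blowup_general j0 a hchain hnonneg E hE hsum hEderiv α hα q hq1 hq2
end

section
/- Let λ > 1, j0 ∈ ℤ, and let (a_j)_{j ≥ j0} be real-valued differentiable functions on [0, ∞) satisfying the chain model: da_j/dt = λ^j a_{j-1}² − λ^{j+1} a_j a_{j+1} for j > j0 and da_{j0}/dt = −λ^{j0+1} a_{j0} a_{j0+1}. If a_j(0) ≥ 0 for every j ≥ j0, then a_j(t) ≥ 0 for every j ≥ j0 and every t ≥ 0. -/
/-!
Fix `j ≥ j0` and put `g = λ^(j+1) a_{j+1}`, which is continuous on `[0, ∞)`. The chain model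
gives `a_j' + g a_j = λ^j a_{j-1}² ≥ 0` (and `= 0` for `j = j0`), so with the integrating factor
`G(t) = ∫₀ᵗ g` the function `a_j e^G` is nondecreasing, whence `a_j(t) e^{G(t)} ≥ a_j(0) ≥ 0`.
-/

open Set

section IntegratingFactor

variable {t₀ : ℝ} {f f' g : ℝ → ℝ}

theorem hasDerivWithinAt_integral_Ici (hg : ContinuousOn g (Ici t₀)) {s : ℝ} (hs : s ∈ Ici t₀) :
    HasDerivWithinAt (fun u => ∫ x in t₀..u, g x) (g s) (Ici t₀) s := by
  have hint : IntervalIntegrable g MeasureTheory.volume t₀ s :=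
    (hg.mono (by rw [uIcc_of_le hs]; exact Icc_subset_Ici_self)).intervalIntegrable
  have hmeas (l : Filter ℝ) (hl : Ici t₀ ∈ l) : StronglyMeasurableAtFilter g l :=
    ⟨Ici t₀, hl, hg.aestronglyMeasurable measurableSet_Ici⟩
  rcases (show t₀ ≤ s from hs).eq_or_lt with rfl | hlt
  · exact intervalIntegral.integral_hasDerivWithinAt_right hint
      (hmeas _ (Filter.mem_of_superset self_mem_nhdsWithin Ioi_subset_Ici_self))
      ((hg t₀ self_mem_Ici).mono Ioi_subset_Ici_self)
  · have hnhds : Ici t₀ ∈ nhds s := Ici_mem_nhds hlt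
    exact (intervalIntegral.integral_hasDerivAt_right hint (hmeas _ hnhds)
      (hg.continuousAt hnhds)).hasDerivWithinAt

theorem monotoneOn_mul_exp_integral (hg : ContinuousOn g (Ici t₀))
    (hf : ∀ t ∈ Ici t₀, HasDerivWithinAt f (f' t) (Ici t₀) t)
    (hf' : ∀ t ∈ Ici t₀, 0 ≤ f' t + g t * f t) :
    MonotoneOn (fun t => f t * Real.exp (∫ x in t₀..t, g x)) (Ici t₀) := by
  have hderiv : ∀ t ∈ Ici t₀,
      HasDerivWithinAt (fun t => f t * Real.exp (∫ x in t₀..t, g x))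
        ((f' t + g t * f t) * Real.exp (∫ x in t₀..t, g x)) (Ici t₀) t := fun t ht =>
    ((hf t ht).mul (hasDerivWithinAt_integral_Ici hg ht).exp).congr_deriv (by ring)
  exact monotoneOn_of_hasDerivWithinAt_nonneg (convex_Ici t₀)
    (fun t ht => (hderiv t ht).continuousWithinAt)
    (fun t ht => (hderiv t (interior_subset ht)).mono interior_subset)
    fun t ht => mul_nonneg (hf' t (interior_subset ht)) (Real.exp_pos _).le

theorem nonneg_of_hasDerivWithinAt_of_add_mul_nonneg (hg : ContinuousOn g (Ici t₀))
    (hf : ∀ t ∈ Ici t₀, HasDerivWithinAt f (f' t) (Ici t₀) t)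
    (hf' : ∀ t ∈ Ici t₀, 0 ≤ f' t + g t * f t) (h₀ : 0 ≤ f t₀) :
    ∀ t ∈ Ici t₀, 0 ≤ f t := by
  intro t ht
  have hmono := monotoneOn_mul_exp_integral hg hf hf' self_mem_Ici ht ht
  simp only [intervalIntegral.integral_same, Real.exp_zero, mul_one] at hmono
  exact nonneg_of_mul_nonneg_left (h₀.trans hmono) (Real.exp_pos _)

end IntegratingFactor

/-- For the chain model
`da_j/dt = λ^j a_{j-1}² − λ^{j+1} a_j a_{j+1}` (`j > j0`),
`da_{j0}/dt = −λ^{j0+1} a_{j0} a_{j0+1}` with `λ > 1`, nonnegative initial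
data stay nonnegative: if `a_j(0) ≥ 0` for every `j ≥ j0`, then
`a_j(t) ≥ 0` for every `j ≥ j0` and every `t ≥ 0`. -/
theorem chainModel_nonneg_preserved
    (lam : ℝ) (hlam : 1 < lam) (j0 : ℤ) (a : ℤ → ℝ → ℝ)
    (hchain : ∀ j : ℤ, j0 < j → ∀ t : ℝ, 0 ≤ t →
      HasDerivWithinAt (a j)
        (lam ^ j * (a (j - 1) t) ^ 2 - lam ^ (j + 1) * a j t * a (j + 1) t)
        (Set.Ici 0) t)
    (hchain0 : ∀ t : ℝ, 0 ≤ t →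
      HasDerivWithinAt (a j0) (-(lam ^ (j0 + 1) * a j0 t * a (j0 + 1) t))
        (Set.Ici 0) t)
    (h0 : ∀ j : ℤ, j0 ≤ j → 0 ≤ a j 0) :
    ∀ j : ℤ, j0 ≤ j → ∀ t : ℝ, 0 ≤ t → 0 ≤ a j t := by
  intro j hj
  have hlam₀ : 0 < lam := zero_lt_one.trans hlam
  have hg : ContinuousOn (fun t => lam ^ (j + 1) * a (j + 1) t) (Ici 0) := fun t ht =>
    continuousWithinAt_const.mul (hchain (j + 1) (by omega) t ht).continuousWithinAt
  rcases hj.eq_or_lt with rfl | hlt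
  · exact nonneg_of_hasDerivWithinAt_of_add_mul_nonneg hg hchain0
      (fun t _ => (by ring : (0 : ℝ) = _).le) (h0 _ le_rfl)
  · refine nonneg_of_hasDerivWithinAt_of_add_mul_nonneg hg (hchain j hlt)
      (fun t _ => ?_) (h0 j hj)
    have : 0 ≤ lam ^ j * a (j - 1) t ^ 2 := by positivity
    linarith
end

section
/- Let λ > 1, j0 ∈ ℤ, and let (a_j)_{j ≥ j0} be real-valued differentiable functions on [0, ∞) satisfying the chain model, with a_j(t) ≥ 0 for all j and t ≥ 0. Assume that the tail energy E_{B(j)}(t) = Σ_{l ≥ j} a_l(t)² is finite for every t ≥ 0 and every j ≥ j0, and that for every t ≥ 0, ∫_0^t λ^{N+1} a_N(s)² a_{N+1}(s) ds → 0 as N → ∞. Then for every j > j0 and all 0 ≤ t1 ≤ t2: E_{B(j)}(t2) − E_{B(j)}(t1) = 2 λ^j ∫_{t1}^{t2} a_{j-1}(s)² a_j(s) ds ≥ 0; in particular, t ↦ E_{B(j)}(t) is nondecreasing, i.e. the energy flux is strictly toward higher wavenumbers. -/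
/-!
Write `Π_k = λ^{k+1} a_k² a_{k+1}` (`chainFlux lam a k`) for the flux from shell `k` to shell
`k + 1`. The chain equations say `d/dt a_k² = 2 Π_{k-1} - 2 Π_k` for `k > j0`, so the derivative of the partial tail
energy `Σ_{l<N} a_{j+l}²` telescopes to `2 Π_{j-1} - 2 Π_{j-1+N}`. Integrating over `[t1, t2]` and
letting `N → ∞`, the partial sums converge to the tail energy and the escaping flux vanishes, which
leaves `E_{B(j)}(t2) - E_{B(j)}(t1) = 2 ∫ Π_{j-1}`; this is nonnegative for a nonnegative solution.
-/

open Set Filter Topology MeasureTheory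

theorem HasDerivWithinAt.sum_range_of_telescoping {𝕜 F : Type*} [NontriviallyNormedField 𝕜]
    [NormedAddCommGroup F] [NormedSpace 𝕜 F] {f : ℕ → 𝕜 → F} {g : ℕ → F} {s : Set 𝕜} {x : 𝕜}
    {N : ℕ} (hf : ∀ n < N, HasDerivWithinAt (f n) (g n - g (n + 1)) s x) :
    HasDerivWithinAt (fun y => ∑ n ∈ Finset.range N, f n y) (g 0 - g N) s x := by
  have hsum := HasDerivWithinAt.fun_sum fun n hn => hf n (Finset.mem_range.1 hn)
  rwa [Finset.sum_range_sub'] at hsum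

theorem intervalIntegral.integral_eq_sub_of_hasDerivWithinAt_Ici {E : Type*}
    [NormedAddCommGroup E] [NormedSpace ℝ E] [CompleteSpace E] {f f' : ℝ → E} {c t1 t2 : ℝ}
    (hct1 : c ≤ t1) (ht12 : t1 ≤ t2) (hf : ∀ t, c ≤ t → HasDerivWithinAt f (f' t) (Ici c) t)
    (hint : IntervalIntegrable f' volume t1 t2) : ∫ t in t1..t2, f' t = f t2 - f t1 := by
  refine integral_eq_sub_of_hasDeriv_right_of_le ht12 (fun t ht => ?_) (fun t ht => ?_) hint
  · exact ((hf t (hct1.trans ht.1)).continuousWithinAt).mono fun s hs => hct1.trans hs.1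
  · exact (hf t (hct1.trans ht.1.le)).mono fun s hs => hct1.trans (ht.1.le.trans (le_of_lt hs))

noncomputable def chainFlux (lam : ℝ) (a : ℤ → ℝ → ℝ) (k : ℤ) (t : ℝ) : ℝ :=
  lam ^ (k + 1) * a k t ^ 2 * a (k + 1) t

structure IsChainModelSolution (lam : ℝ) (j0 : ℤ) (a : ℤ → ℝ → ℝ) : Prop where
  hasDerivWithinAt : ∀ j : ℤ, j0 < j → ∀ t : ℝ, 0 ≤ t →
    HasDerivWithinAt (a j) (lam ^ j * a (j - 1) t ^ 2 - lam ^ (j + 1) * a j t * a (j + 1) t)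
      (Ici 0) t
  hasDerivWithinAt_base : ∀ t : ℝ, 0 ≤ t →
    HasDerivWithinAt (a j0) (-(lam ^ (j0 + 1) * a j0 t * a (j0 + 1) t)) (Ici 0) t

namespace IsChainModelSolution

variable {lam : ℝ} {j0 : ℤ} {a : ℤ → ℝ → ℝ}

theorem continuousOn (h : IsChainModelSolution lam j0 a) {k : ℤ} (hk : j0 ≤ k) :
    ContinuousOn (a k) (Ici 0) := fun t ht => by
  rcases hk.eq_or_lt with rfl | hk
  · exact (h.hasDerivWithinAt_base t ht).continuousWithinAt
  · exact (h.hasDerivWithinAt k hk t ht).continuousWithinAt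

theorem intervalIntegrable_chainFlux (h : IsChainModelSolution lam j0 a) {k : ℤ} (hk : j0 ≤ k)
    {t1 t2 : ℝ} (ht1 : 0 ≤ t1) (ht2 : 0 ≤ t2) :
    IntervalIntegrable (chainFlux lam a k) volume t1 t2 := by
  refine ContinuousOn.intervalIntegrable ?_
  have hsub : uIcc t1 t2 ⊆ Ici 0 := fun s hs => le_trans (le_min ht1 ht2) hs.1
  exact ((continuousOn_const.mul ((h.continuousOn hk).pow 2)).mul
    (h.continuousOn (by omega))).mono hsub

theorem hasDerivWithinAt_sq (h : IsChainModelSolution lam j0 a) {k : ℤ} (hk : j0 < k) {t : ℝ}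
    (ht : 0 ≤ t) :
    HasDerivWithinAt (fun s => a k s ^ 2)
      (2 * chainFlux lam a (k - 1) t - 2 * chainFlux lam a k t) (Ici 0) t := by
  refine ((h.hasDerivWithinAt k hk t ht).pow 2).congr_deriv ?_
  simp only [chainFlux, sub_add_cancel]
  ring

theorem hasDerivWithinAt_sum_range_sq (h : IsChainModelSolution lam j0 a) {j : ℤ} (hj : j0 < j)
    (N : ℕ) {t : ℝ} (ht : 0 ≤ t) :
    HasDerivWithinAt (fun s => ∑ l ∈ Finset.range N, a (j + l) s ^ 2)
      (2 * chainFlux lam a (j - 1) t - 2 * chainFlux lam a (j - 1 + N) t) (Ici 0) t := by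
  have htele := HasDerivWithinAt.sum_range_of_telescoping (N := N)
    (f := fun l s => a (j + l) s ^ 2) (g := fun n : ℕ => 2 * chainFlux lam a (j - 1 + n) t)
    fun n _ => by
      have hderiv := h.hasDerivWithinAt_sq (k := j + n) (by omega) ht
      rw [show j + n - 1 = j - 1 + n by ring] at hderiv
      exact hderiv.congr_deriv (by push_cast; ring_nf)
  simpa only [Nat.cast_zero, add_zero] using htele

theorem sum_range_sq_sub_eq (h : IsChainModelSolution lam j0 a) {j : ℤ} (hj : j0 < j) (N : ℕ)
    {t1 t2 : ℝ} (ht1 : 0 ≤ t1) (ht12 : t1 ≤ t2) :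
    ∑ l ∈ Finset.range N, a (j + l) t2 ^ 2 - ∑ l ∈ Finset.range N, a (j + l) t1 ^ 2 =
      2 * (∫ s in t1..t2, chainFlux lam a (j - 1) s) -
        2 * ∫ s in t1..t2, chainFlux lam a (j - 1 + N) s := by
  have ht2 := ht1.trans ht12
  have hint (k : ℤ) (hk : j0 ≤ k) :
      IntervalIntegrable (fun s => 2 * chainFlux lam a k s) volume t1 t2 :=
    (h.intervalIntegrable_chainFlux hk ht1 ht2).const_mul 2
  rw [← intervalIntegral.integral_eq_sub_of_hasDerivWithinAt_Ici ht1 ht12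
      (fun t ht => h.hasDerivWithinAt_sum_range_sq hj N ht)
      ((hint _ (by omega)).sub (hint _ (by omega))),
    intervalIntegral.integral_sub (hint _ (by omega)) (hint _ (by omega)),
    intervalIntegral.integral_const_mul, intervalIntegral.integral_const_mul]

theorem tendsto_integral_chainFlux (h : IsChainModelSolution lam j0 a)
    (hflux : ∀ t : ℝ, 0 ≤ t →
      Tendsto (fun N : ℕ => ∫ s in (0 : ℝ)..t, chainFlux lam a (j0 + N) s) atTop (𝓝 0))
    {k : ℤ} (hk : j0 ≤ k) {t1 t2 : ℝ} (ht1 : 0 ≤ t1) (ht2 : 0 ≤ t2) :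
    Tendsto (fun N : ℕ => ∫ s in t1..t2, chainFlux lam a (k + N) s) atTop (𝓝 0) := by
  have hbase : Tendsto (fun N : ℕ => ∫ s in t1..t2, chainFlux lam a (j0 + N) s) atTop (𝓝 0) := by
    have hdiff := (hflux t2 ht2).sub (hflux t1 ht1)
    rw [sub_zero] at hdiff
    refine hdiff.congr fun N => ?_
    have hint (t : ℝ) (ht : 0 ≤ t) :=
      h.intervalIntegrable_chainFlux (k := j0 + N) (by omega) le_rfl ht
    exact intervalIntegral.integral_interval_sub_left (hint t2 ht2) (hint t1 ht1)
  obtain ⟨m, rfl⟩ : ∃ m : ℕ, k = j0 + m := ⟨(k - j0).toNat, by omega⟩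
  refine ((tendsto_add_atTop_iff_nat m).2 hbase).congr fun N => ?_
  push_cast
  ring_nf

theorem tsum_sq_sub_eq (h : IsChainModelSolution lam j0 a)
    (hflux : ∀ t : ℝ, 0 ≤ t →
      Tendsto (fun N : ℕ => ∫ s in (0 : ℝ)..t, chainFlux lam a (j0 + N) s) atTop (𝓝 0))
    {j : ℤ} (hj : j0 < j) {t1 t2 : ℝ} (ht1 : 0 ≤ t1) (ht12 : t1 ≤ t2)
    (hsum1 : Summable fun l : ℕ => a (j + l) t1 ^ 2)
    (hsum2 : Summable fun l : ℕ => a (j + l) t2 ^ 2) :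
    ∑' l : ℕ, a (j + l) t2 ^ 2 - ∑' l : ℕ, a (j + l) t1 ^ 2 =
      2 * ∫ s in t1..t2, chainFlux lam a (j - 1) s := by
  have hpartial := hsum2.hasSum.tendsto_sum_nat.sub hsum1.hasSum.tendsto_sum_nat
  have hflux_tail := (h.tendsto_integral_chainFlux hflux (k := j - 1) (by omega) ht1
    (ht1.trans ht12)).const_mul 2
  rw [mul_zero] at hflux_tail
  refine tendsto_nhds_unique hpartial ?_
  simpa only [h.sum_range_sq_sub_eq hj _ ht1 ht12, sub_zero] using
    (tendsto_const_nhds (x := 2 * ∫ s in t1..t2, chainFlux lam a (j - 1) s)).sub hflux_tail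

end IsChainModelSolution

/-- For the chain model
`da_j/dt = λ^j a_{j-1}² − λ^{j+1} a_j a_{j+1}` (`j > j0`),
`da_{j0}/dt = −λ^{j0+1} a_{j0} a_{j0+1}` with `λ > 1` and a nonnegative
solution whose tail energies `E_{B(j)}(t) = Σ_{l ≥ j} a_l(t)²` are finite,
and whose flux escaping to infinity vanishes, for every `j > j0` and
`0 ≤ t1 ≤ t2`:
`E_{B(j)}(t2) − E_{B(j)}(t1) = 2 λ^j ∫_{t1}^{t2} a_{j-1}² a_j ds ≥ 0`;
in particular `t ↦ E_{B(j)}(t)` is nondecreasing: the energy flux is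
strictly toward higher wavenumbers. -/
theorem chainModel_energy_flux_to_high_wavenumbers
    (lam : ℝ) (hlam : 1 < lam) (j0 : ℤ) (a : ℤ → ℝ → ℝ)
    (hchain : ∀ j : ℤ, j0 < j → ∀ t : ℝ, 0 ≤ t →
      HasDerivWithinAt (a j)
        (lam ^ j * (a (j - 1) t) ^ 2 - lam ^ (j + 1) * a j t * a (j + 1) t)
        (Set.Ici 0) t)
    (hchain0 : ∀ t : ℝ, 0 ≤ t →
      HasDerivWithinAt (a j0) (-(lam ^ (j0 + 1) * a j0 t * a (j0 + 1) t))
        (Set.Ici 0) t)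
    (hnonneg : ∀ j : ℤ, j0 ≤ j → ∀ t : ℝ, 0 ≤ t → 0 ≤ a j t)
    (E : ℤ → ℝ → ℝ)
    (hE : ∀ j : ℤ, ∀ t : ℝ, E j t = ∑' l : ℕ, (a (j + l) t) ^ 2)
    (hsum : ∀ j : ℤ, j0 ≤ j → ∀ t : ℝ, 0 ≤ t →
      Summable (fun l : ℕ => (a (j + l) t) ^ 2))
    (hflux : ∀ t : ℝ, 0 ≤ t →
      Filter.Tendsto
        (fun N : ℕ =>
          ∫ s in (0 : ℝ)..t,
            lam ^ (j0 + (N : ℤ) + 1) * (a (j0 + N) s) ^ 2 * a (j0 + N + 1) s)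
        Filter.atTop (nhds 0)) :
    ∀ j : ℤ, j0 < j → ∀ t1 t2 : ℝ, 0 ≤ t1 → t1 ≤ t2 →
      (E j t2 - E j t1
          = 2 * lam ^ j * ∫ s in t1..t2, (a (j - 1) s) ^ 2 * a j s) ∧
        E j t1 ≤ E j t2 := by
  intro j hj t1 t2 ht1 ht12
  have hsol : IsChainModelSolution lam j0 a := ⟨hchain, hchain0⟩
  have hflux_eq : chainFlux lam a (j - 1) = fun s => lam ^ j * (a (j - 1) s ^ 2 * a j s) := by
    funext s
    simp only [chainFlux, sub_add_cancel, mul_assoc]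
  have hidentity : E j t2 - E j t1 = 2 * lam ^ j * ∫ s in t1..t2, a (j - 1) s ^ 2 * a j s := by
    rw [hE, hE, hsol.tsum_sq_sub_eq hflux hj ht1 ht12 (hsum j hj.le t1 ht1)
      (hsum j hj.le t2 (ht1.trans ht12)), hflux_eq, intervalIntegral.integral_const_mul, mul_assoc]
  have hintegral_nonneg : 0 ≤ ∫ s in t1..t2, a (j - 1) s ^ 2 * a j s :=
    intervalIntegral.integral_nonneg ht12 fun s hs =>
      mul_nonneg (sq_nonneg _) (hnonneg j hj.le s (ht1.trans hs.1))
  have hlam_pow : 0 < lam ^ j := zpow_pos (by linarith) j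
  refine ⟨hidentity, ?_⟩
  nlinarith
end

section
/- Let f : ℝ → ℝ be continuously differentiable, T > 0 and δ > 0 such that 1 + t f'(η) ≥ δ for all η ∈ ℝ and t ∈ [0, T). Then for each t ∈ [0, T) the map g_t(η) = η + t f(η) is a bijection of ℝ onto ℝ, and the function u(x, t) = f(g_t^{-1}(x)) — i.e. the function defined implicitly by u = f(η), x = η + t f(η) — is differentiable on ℝ × (0, T), satisfies the inviscid Burgers equation ∂u/∂t + u ∂u/∂x = 0, and satisfies the initial condition u(x, 0) = f(x). -/
/-!
For fixed `t`, `g_t(η) = η + t f(η)` has derivative `1 + t f'(η) ≥ δ`, so it is strictly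
increasing and grows at least linearly in both directions: it is a bijection of `ℝ`.

The characteristic map `Φ(η, t) = (η + t f(η), t)` has at `(η, t)` the invertible derivative
`(a, b) ↦ ((1 + t f'(η)) a + f(η) b, b)`. By the inverse function theorem `Φ` has a differentiable
local inverse `ψ`, and near `Φ(η, t)` the solution is `u = f ∘ pr₁ ∘ ψ`. Its derivative kills the
characteristic direction `(f(η), 1) = (u, 1)`, which is exactly `∂ₜu + u ∂ₓu = 0`.
-/

open Filter Topology

theorem bijective_of_le_deriv {g : ℝ → ℝ} {δ : ℝ} (hg : Differentiable ℝ g)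
    (hδ : 0 < δ) (hg' : ∀ x, δ ≤ deriv g x) : Function.Bijective g := by
  have grow : ∀ ⦃x y⦄, x ≤ y → δ * (y - x) ≤ g y - g x :=
    mul_sub_le_image_sub_of_le_deriv hg hg'
  refine ⟨(strictMono_of_deriv_pos fun x => hδ.trans_le (hg' x)).injective,
    hg.continuous.surjective ?_ ?_⟩
  · refine tendsto_atTop_mono' _ ?_
      (tendsto_atTop_add_const_right _ (g 0) (tendsto_id.const_mul_atTop hδ))
    filter_upwards [eventually_ge_atTop 0] with x hx
    have := grow hx
    simp only [id, sub_zero] at this ⊢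
    linarith
  · refine tendsto_atBot_mono' _ ?_
      (tendsto_atBot_add_const_right _ (g 0) (tendsto_id.const_mul_atBot hδ))
    filter_upwards [eventually_le_atBot 0] with x hx
    have := grow hx
    simp only [id, zero_sub] at this ⊢
    linarith

noncomputable def shearEquiv (c d : ℝ) (hc : c ≠ 0) : (ℝ × ℝ) ≃L[ℝ] ℝ × ℝ :=
  LinearEquiv.toContinuousLinearEquiv
    { toFun := fun p => (c * p.1 + d * p.2, p.2)
      invFun := fun p => ((p.1 - d * p.2) / c, p.2)
      map_add' := fun p q => by ext <;> simp only [Prod.fst_add, Prod.snd_add]; ring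
      map_smul' := fun r p => by
        ext <;> simp only [Prod.smul_fst, Prod.smul_snd, smul_eq_mul, RingHom.id_apply]; ring
      left_inv := fun p => by ext <;> simp only; field_simp; ring
      right_inv := fun p => by ext <;> simp only; field_simp; ring }

@[simp]
theorem shearEquiv_apply (c d : ℝ) (hc : c ≠ 0) (p : ℝ × ℝ) :
    shearEquiv c d hc p = (c * p.1 + d * p.2, p.2) := rfl

@[simp]
theorem shearEquiv_symm_apply (c d : ℝ) (hc : c ≠ 0) (p : ℝ × ℝ) :
    (shearEquiv c d hc).symm p = ((p.1 - d * p.2) / c, p.2) := rfl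

def characteristicMap (f : ℝ → ℝ) (p : ℝ × ℝ) : ℝ × ℝ := (p.1 + p.2 * f p.1, p.2)

theorem hasStrictFDerivAt_characteristicMap {f : ℝ → ℝ} {f' η t : ℝ}
    (hf : HasStrictDerivAt f f' η) (hc : 1 + t * f' ≠ 0) :
    HasStrictFDerivAt (characteristicMap f)
      (shearEquiv (1 + t * f') (f η) hc : (ℝ × ℝ) →L[ℝ] ℝ × ℝ) (η, t) := by
  have hfst : HasStrictFDerivAt (fun p : ℝ × ℝ => f p.1)
      (f' • ContinuousLinearMap.fst ℝ ℝ ℝ) (η, t) :=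
    hf.comp_hasStrictFDerivAt (η, t) hasStrictFDerivAt_fst
  refine ((hasStrictFDerivAt_fst.add (hasStrictFDerivAt_snd.mul hfst)).prodMk
    hasStrictFDerivAt_snd).congr_fderiv ?_
  ext <;> simp

theorem hasFDerivAt_of_characteristics {f : ℝ → ℝ} {f' η t : ℝ} {u : ℝ → ℝ → ℝ}
    (hf : HasStrictDerivAt f f' η) (hc : 1 + t * f' ≠ 0)
    (hu : ∀ᶠ q in 𝓝 (η + t * f η, t), ∀ ξ, q.1 = ξ + q.2 * f ξ → u q.1 q.2 = f ξ) :
    HasFDerivAt (fun p : ℝ × ℝ => u p.1 p.2)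
      (f' • (ContinuousLinearMap.fst ℝ ℝ ℝ ∘L
        ((shearEquiv (1 + t * f') (f η) hc).symm : (ℝ × ℝ) →L[ℝ] ℝ × ℝ)))
      (η + t * f η, t) := by
  have hΦ := hasStrictFDerivAt_characteristicMap hf hc
  set A := shearEquiv (1 + t * f') (f η) hc
  set ψ := hΦ.localInverse _ _ (η, t)
  have hψ : HasFDerivAt ψ (A.symm : (ℝ × ℝ) →L[ℝ] ℝ × ℝ) (characteristicMap f (η, t)) :=
    hΦ.to_localInverse.hasFDerivAt
  have hfψ : HasFDerivAt (fun q => f (ψ q).1)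
      (f' • (ContinuousLinearMap.fst ℝ ℝ ℝ ∘L (A.symm : (ℝ × ℝ) →L[ℝ] ℝ × ℝ)))
      (characteristicMap f (η, t)) := by
    have hψη : ψ (characteristicMap f (η, t)) = (η, t) := hΦ.localInverse_apply_image
    refine HasDerivAt.comp_hasFDerivAt (f := fun q => (ψ q).1) _ ?_ (hasFDerivAt_fst.comp _ hψ)
    rw [hψη]
    exact hf.hasDerivAt
  refine hfψ.congr_of_eventuallyEq ?_
  filter_upwards [hΦ.eventually_right_inverse, hu] with q hq hqu
  obtain ⟨h1, h2⟩ := Prod.ext_iff.mp hq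
  dsimp only [characteristicMap] at h1 h2
  rw [h2] at h1
  exact hqu _ h1.symm

theorem burgers_of_hasFDerivAt {u : ℝ → ℝ → ℝ} {L : ℝ × ℝ →L[ℝ] ℝ} {x t : ℝ}
    (hu : HasFDerivAt (fun p : ℝ × ℝ => u p.1 p.2) L (x, t)) (hL : L (u x t, 1) = 0) :
    deriv (fun s => u x s) t + u x t * deriv (fun y => u y t) x = 0 := by
  have ht : HasDerivAt (fun s => u x s) (L (0, 1)) t :=
    hu.comp_hasDerivAt (f := fun s => (x, s)) t ((hasDerivAt_const t x).prodMk (hasDerivAt_id t))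
  have hx : HasDerivAt (fun y => u y t) (L (1, 0)) x :=
    hu.comp_hasDerivAt (f := fun y => (y, t)) x ((hasDerivAt_id x).prodMk (hasDerivAt_const x t))
  have hL' : L (u x t, 1) = u x t * L (1, 0) + L (0, 1) := by
    rw [← smul_eq_mul, ← L.map_smul, ← L.map_add]
    simp
  rw [ht.deriv, hx.deriv]
  linarith

/-- Let `f` be `C¹`, `T > 0`, `δ > 0` with
`1 + t f'(η) ≥ δ` for all `η ∈ ℝ`, `t ∈ [0,T)`. Then for each `t ∈ [0,T)`
the map `g_t(η) = η + t f(η)` is a bijection of `ℝ`, and the function `u`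
defined implicitly by `u = f(η)`, `x = η + t f(η)` is differentiable on
`ℝ × (0,T)`, satisfies the inviscid Burgers equation
`∂u/∂t + u ∂u/∂x = 0` there, and satisfies `u(x,0) = f(x)`. -/
theorem burgers_method_of_characteristics
    (f : ℝ → ℝ) (hf : ContDiff ℝ 1 f) (T δ : ℝ) (hT : 0 < T) (hδ : 0 < δ)
    (hmono : ∀ η : ℝ, ∀ t ∈ Set.Ico (0 : ℝ) T, δ ≤ 1 + t * deriv f η) :
    (∀ t ∈ Set.Ico (0 : ℝ) T, Function.Bijective fun η => η + t * f η) ∧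
    ∀ u : ℝ → ℝ → ℝ,
      (∀ x : ℝ, ∀ t ∈ Set.Ico (0 : ℝ) T, ∀ η : ℝ,
        x = η + t * f η → u x t = f η) →
      DifferentiableOn ℝ (fun p : ℝ × ℝ => u p.1 p.2)
          (Set.univ ×ˢ Set.Ioo 0 T) ∧
        (∀ x : ℝ, ∀ t ∈ Set.Ioo (0 : ℝ) T,
          deriv (fun s => u x s) t + u x t * deriv (fun y => u y t) x = 0) ∧
        (∀ x : ℝ, u x 0 = f x) := by
  have hfd : Differentiable ℝ f := hf.differentiable one_ne_zero
  have hbij : ∀ t ∈ Set.Ico (0 : ℝ) T, Function.Bijective fun η => η + t * f η := by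
    intro t ht
    have hg : ∀ η, HasDerivAt (fun η => η + t * f η) (1 + t * deriv f η) η := fun η =>
      (hasDerivAt_id η).add ((hfd η).hasDerivAt.const_mul t)
    exact bijective_of_le_deriv (fun η => (hg η).differentiableAt) hδ
      fun η => (hg η).deriv ▸ hmono η t ht
  refine ⟨hbij, fun u hu => ?_⟩
  have hU : ∀ x, ∀ t ∈ Set.Ioo (0 : ℝ) T, ∃ L : ℝ × ℝ →L[ℝ] ℝ,
      HasFDerivAt (fun p : ℝ × ℝ => u p.1 p.2) L (x, t) ∧ L (u x t, 1) = 0 := by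
    intro x t ht
    have ht' : t ∈ Set.Ico 0 T := Set.Ioo_subset_Ico_self ht
    obtain ⟨η, rfl⟩ := (hbij t ht').2 x
    have hc : 1 + t * deriv f η ≠ 0 := (hδ.trans_le (hmono η t ht')).ne'
    refine ⟨_, hasFDerivAt_of_characteristics
      (hf.contDiffAt.hasStrictDerivAt one_ne_zero) hc ?_, ?_⟩
    · filter_upwards [continuous_snd.continuousAt.preimage_mem_nhds (Ioo_mem_nhds ht.1 ht.2)]
        with q hq ξ hξ using hu q.1 q.2 (Set.Ioo_subset_Ico_self hq) ξ hξ
    · simp [hu _ t ht' η rfl]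
  refine ⟨fun p hp => ?_, fun x t ht => ?_, fun x => hu x 0 ⟨le_rfl, hT⟩ x (by ring)⟩
  · obtain ⟨L, hL, -⟩ := hU p.1 p.2 hp.2
    exact hL.differentiableAt.differentiableWithinAt
  · obtain ⟨L, hL, hLu⟩ := hU x t ht
    exact burgers_of_hasFDerivAt hL hLu
end
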